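/- arXiv:0708.1363 — 2 statements merged into one kernel-verified Lean document; each statement's English description precedes it below -/
import Mathlib

section
/- Let k be a field of characteristic zero and n ≥ 1, and let λ be a partition of 2n in which every odd part occurs with even multiplicity. Then there exists a nilpotent matrix X ∈ sp_{2n}(k) whose Jordan type is λ. -/
/-!
Split the partition into blocks `{2m}` (one per even part) and `{m, m}` (one per pair of equal
odd parts). With `k^{2n} = W ⊕ W'` split into two Lagrangian halves with bases dual under `J`,
a block `{m, m}` is realised by a Jordan chain of length `m` in `W` together with the
negative-transposed chain in `W'`, and a block `{2m}` by a single chain that climbs through `m`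
basis vectors of `W` and then descends through the corresponding vectors of `W'`. The matrix is
then of block form `[[A, 0], [C, -Aᵀ]]` with `C` symmetric, hence in `sp`, and it is a
signed weighted shift along these chains: the rank of its `j`-th power counts the basis
vectors with at least `j` further steps in their chain, which is `∑ᵢ (λᵢ - j)`. The second
difference of these ranks in `j` is the multiplicity of the part `j`.
-/

open Matrix

/-- The standard symplectic matrix `J = [[0, I_n], [-I_n, 0]]` as a `2n × 2n` matrix. -/
def sympJ (k : Type) [Field k] (n : ℕ) : Matrix (Fin (2 * n)) (Fin (2 * n)) k :=
  fun i j =>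
    if (i : ℕ) + n = (j : ℕ) then 1
    else if (j : ℕ) + n = (i : ℕ) then -1 else 0

/-- `X` has Jordan type `μ`: for every `j ≥ 1`, the multiplicity of `j` as a part of `μ`
is `rank(X^(j-1)) - 2 rank(X^j) + rank(X^(j+1))`. -/
def HasJordanType (k : Type) [Field k] {N : ℕ} (X : Matrix (Fin N) (Fin N) k)
    (μ : Nat.Partition N) : Prop :=
  ∀ j : ℕ, 1 ≤ j →
    (μ.parts.count j : ℤ) =
      ((X ^ (j - 1)).rank : ℤ) - 2 * ((X ^ j).rank : ℤ) + ((X ^ (j + 1)).rank : ℤ)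

theorem Multiset.count_eq_second_diff_sum_tsub (s : Multiset ℕ) {j : ℕ} (hj : 1 ≤ j) :
    (s.count j : ℤ) = ((s.map (· - (j - 1))).sum : ℕ) - 2 * ((s.map (· - j)).sum : ℕ)
      + ((s.map (· - (j + 1))).sum : ℕ) := by
  induction s using Multiset.induction with
  | empty => simp
  | cons a s ih =>
    simp only [Multiset.count_cons, Multiset.map_cons, Multiset.sum_cons]
    push_cast at ih ⊢
    split_ifs <;> omega

theorem Multiset.sum_map_finset_sum {ι α M : Type*} [AddCommMonoid M] (s : Finset ι)
    (t : ι → Multiset α) (f : α → M) :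
    ((∑ i ∈ s, t i).map f).sum = ∑ i ∈ s, ((t i).map f).sum :=
  map_sum (Multiset.sumAddMonoidHom.comp (Multiset.mapAddMonoidHom f)) t s

theorem Matrix.eq_zero_of_rank_eq_zero {m n k : Type*} [Fintype m] [Fintype n]
    [DecidableEq n] [Field k] (A : Matrix m n k) (h : A.rank = 0) : A = 0 := by
  rw [Matrix.rank, Submodule.finrank_eq_zero, LinearMap.range_eq_bot] at h
  exact Matrix.toLin'.injective (by rwa [map_zero])

section JordanType

variable {k : Type} [Field k] {N : ℕ} (X : Matrix (Fin N) (Fin N) k) (μ : Nat.Partition N)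

theorem isNilpotent_of_rank_pow_eq (h : ∀ j, (X ^ j).rank = (μ.parts.map (· - j)).sum) :
    IsNilpotent X := by
  refine ⟨N, Matrix.eq_zero_of_rank_eq_zero _ ?_⟩
  rw [h, Multiset.sum_eq_zero_iff]
  simp only [Multiset.mem_map, forall_exists_index, and_imp]
  rintro _ a ha rfl
  have := μ.parts_sum ▸ Multiset.le_sum_of_mem ha
  omega

theorem hasJordanType_of_rank_pow_eq (h : ∀ j, (X ^ j).rank = (μ.parts.map (· - j)).sum) :
    HasJordanType k X μ := fun j hj => by
  rw [h, h, h]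
  exact μ.parts.count_eq_second_diff_sum_tsub hj

end JordanType

section PartialIter

variable {N : Type*} (σ : N → Option N)

def partialIter : ℕ → N → Option N
  | 0, b => some b
  | j + 1, b => (σ b).bind (partialIter j)

theorem partialIter_eq_some_inj (hσ : ∀ a b b', σ b = some a → σ b' = some a → b = b') :
    ∀ j a b b', partialIter σ j b = some a → partialIter σ j b' = some a → b = b'
  | 0, a, b, b', h, h' => by simp_all [partialIter]
  | j + 1, a, b, b', h, h' => by
    simp only [partialIter, Option.bind_eq_some_iff] at h h'
    obtain ⟨c, hc, hca⟩ := h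
    obtain ⟨c', hc', hca'⟩ := h'
    obtain rfl := partialIter_eq_some_inj hσ j a c c' hca hca'
    exact hσ c b b' hc hc'

theorem partialIter_isSome_iff (life : N → ℕ) (h0 : ∀ b, σ b = none → life b = 0)
    (h1 : ∀ b b', σ b = some b' → life b = life b' + 1) :
    ∀ j b, (partialIter σ j b).isSome ↔ j ≤ life b
  | 0, b => by simp [partialIter]
  | j + 1, b => by
    cases hb : σ b with
    | none => simp [partialIter, hb, h0 b hb]
    | some b' =>
      simp only [partialIter, hb, Option.bind_some, h1 b b' hb,
        partialIter_isSome_iff life h0 h1 j b']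
      omega

end PartialIter

section WeightedShift

variable {N : Type*} [DecidableEq N]

def weightedShift {R : Type*} [Zero R] (σ : N → Option N) (c : N → R) : Matrix N N R :=
  of fun a b => if σ b = some a then c b else 0

variable [Fintype N] {k : Type*} [Field k]

theorem exists_weightedShift_partialIter_eq_pow (σ : N → Option N) (c : N → k)
    (hc : ∀ b, c b ≠ 0) (j : ℕ) :
    ∃ d : N → k, (∀ b, d b ≠ 0) ∧
      weightedShift (partialIter σ j) d = weightedShift σ c ^ j := by
  induction j with
  | zero =>
    refine ⟨1, fun _ => one_ne_zero, ?_⟩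
    ext a b
    simp [weightedShift, partialIter, one_apply, eq_comm]
  | succ j ih =>
    obtain ⟨d, hd, hdj⟩ := ih
    refine ⟨fun b => (σ b).elim 1 (fun b' => d b' * c b), fun b => ?_, ?_⟩
    · dsimp only
      cases σ b <;> simp [hd, hc]
    · ext a b
      rw [pow_succ, ← hdj, mul_apply]
      cases hb : σ b with
      | none => simp [weightedShift, partialIter, hb]
      | some b' =>
        rw [Finset.sum_eq_single b' (fun l _ hl => by simp [weightedShift, hb, Ne.symm hl])
          (by simp)]
        simp only [weightedShift, of_apply, partialIter, hb, Option.bind_some, Option.elim]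
        split_ifs <;> simp

theorem rank_weightedShift (τ : N → Option N) (d : N → k) (hd : ∀ b, d b ≠ 0)
    (hτ : ∀ a b b', τ b = some a → τ b' = some a → b = b') :
    (weightedShift τ d).rank = (Finset.univ.filter fun b => (τ b).isSome).card := by
  set M := weightedShift τ d
  let dom := {b : N // (τ b).isSome}
  choose target htarget using fun b : dom => Option.isSome_iff_exists.mp b.2
  have htarget_inj : Function.Injective target := fun b b' h =>
    Subtype.ext (hτ _ _ _ (htarget b) (h ▸ htarget b'))
  have hcol : ∀ b : dom, M.col b = d b • Pi.basisFun k N (target b) := fun b => by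
    ext a
    by_cases ha : target b = a
    · simp [M, weightedShift, ← ha, htarget b]
    · simp [M, weightedShift, htarget b, Ne.symm ha, ha]
  have hli : LinearIndependent k fun b : dom => M.col b := by
    simp_rw [hcol]
    exact ((Pi.basisFun k N).linearIndependent.comp target htarget_inj).units_smul
      fun b => Units.mk0 _ (hd b)
  have hspan : Submodule.span k (Set.range M.col) =
      Submodule.span k (Set.range fun b : dom => M.col b) := by
    refine le_antisymm (Submodule.span_le.mpr ?_) (Submodule.span_mono ?_)
    · rintro _ ⟨b, rfl⟩
      by_cases hb : (τ b).isSome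
      · exact Submodule.subset_span ⟨⟨b, hb⟩, rfl⟩
      · have hzero : M.col b = 0 := by
          ext a
          simp [M, weightedShift, Option.not_isSome_iff_eq_none.mp hb]
        simp [hzero]
    · rintro _ ⟨b, rfl⟩
      exact ⟨b, rfl⟩
  rw [rank_eq_finrank_span_cols, hspan, finrank_span_eq_card hli, Fintype.card_subtype]

theorem rank_weightedShift_pow (σ : N → Option N) (c : N → k) (hc : ∀ b, c b ≠ 0)
    (hσ : ∀ a b b', σ b = some a → σ b' = some a → b = b') (life : N → ℕ)
    (h0 : ∀ b, σ b = none → life b = 0)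
    (h1 : ∀ b b', σ b = some b' → life b = life b' + 1) (j : ℕ) :
    (weightedShift σ c ^ j).rank = (Finset.univ.filter fun b => j ≤ life b).card := by
  obtain ⟨d, hd, hdj⟩ := exists_weightedShift_partialIter_eq_pow σ c hc j
  rw [← hdj, rank_weightedShift _ d hd (partialIter_eq_some_inj σ hσ j)]
  simp_rw [partialIter_isSome_iff σ life h0 h1]

end WeightedShift

section Symplectic

open LieAlgebra.Symplectic

variable {l : Type*} [DecidableEq l]

def sumSelfEquivFinTwoMul {n : ℕ} (e : l ≃ Fin n) : l ⊕ l ≃ Fin (2 * n) :=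
  (Equiv.sumCongr e e).trans (finSumFinEquiv.trans (finCongr (two_mul n).symm))

theorem sympJ_eq_neg_reindex_J {k : Type} [Field k] {n : ℕ} (e : l ≃ Fin n) :
    sympJ k n = -reindex (sumSelfEquivFinTwoMul e) (sumSelfEquivFinTwoMul e) (J l k) := by
  ext i j
  rw [neg_apply, reindex_apply, submatrix_apply]
  obtain ⟨u, rfl⟩ := (sumSelfEquivFinTwoMul e).surjective i
  obtain ⟨v, rfl⟩ := (sumSelfEquivFinTwoMul e).surjective j
  rw [Equiv.symm_apply_apply, Equiv.symm_apply_apply]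
  rcases u with a | a <;> rcases v with b | b <;>
    simp only [sympJ, J, sumSelfEquivFinTwoMul, Equiv.trans_apply, Equiv.sumCongr_apply,
      Sum.map_inl, Sum.map_inr, finSumFinEquiv_apply_left, finSumFinEquiv_apply_right,
      finCongr_apply, Fin.val_cast, Fin.val_castAdd, Fin.val_natAdd, fromBlocks_apply₁₁,
      fromBlocks_apply₁₂, fromBlocks_apply₂₁, fromBlocks_apply₂₂, Matrix.zero_apply,
      Matrix.neg_apply, one_apply, ← e.injective.eq_iff, ← Fin.val_inj] <;>
    split_ifs <;> first | rfl | omega | simp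

variable [Fintype l]

theorem mem_sp_iff {R : Type*} [CommRing R] (A : Matrix (l ⊕ l) (l ⊕ l) R) :
    A ∈ sp l R ↔ Aᵀ * J l R + J l R * A = 0 := by
  rw [sp, mem_skewAdjointMatricesLieSubalgebra, mem_skewAdjointMatricesSubmodule,
    Matrix.IsSkewAdjoint, Matrix.IsAdjointPair, mul_neg, ← add_eq_zero_iff_eq_neg]

theorem mem_sp_of_toBlocks {R : Type*} [CommRing R] (A : Matrix (l ⊕ l) (l ⊕ l) R)
    (h₁₂ : A.toBlocks₁₂ = 0) (h₂₁ : A.toBlocks₂₁ᵀ = A.toBlocks₂₁)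
    (h₂₂ : A.toBlocks₂₂ = -A.toBlocks₁₁ᵀ) : A ∈ sp l R := by
  rw [mem_sp_iff, ← fromBlocks_toBlocks A, h₁₂, h₂₂, fromBlocks_transpose, h₂₁, J,
    fromBlocks_multiply, fromBlocks_multiply, fromBlocks_add]
  simp

theorem exists_sympJ_of_mem_sp {k : Type} [Field k] {n : ℕ} (hl : Fintype.card l = n)
    (X : Matrix (l ⊕ l) (l ⊕ l) k) (hX : X ∈ sp l k) :
    ∃ Y : Matrix (Fin (2 * n)) (Fin (2 * n)) k,
      Yᵀ * sympJ k n + sympJ k n * Y = 0 ∧ ∀ j, (Y ^ j).rank = (X ^ j).rank := by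
  set E := sumSelfEquivFinTwoMul (Fintype.equivFinOfCardEq hl)
  refine ⟨reindex E E X, ?_, fun j => ?_⟩
  · rw [sympJ_eq_neg_reindex_J (Fintype.equivFinOfCardEq hl), transpose_reindex,
      ← coe_reindexAlgEquiv k k, mul_neg, neg_mul, ← neg_add, ← map_mul, ← map_mul,
      ← map_add, (mem_sp_iff X).mp hX, map_zero, neg_zero]
  · rw [← coe_reindexAlgEquiv k k, ← map_pow, coe_reindexAlgEquiv, rank_reindex]

end Symplectic

theorem sum_fin_ite_le_add (n c j : ℕ) :
    ∑ a : Fin n, (if j ≤ c + a then 1 else 0) = n - (j - c) := by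
  rw [Fin.sum_univ_eq_sum_range (fun a => if j ≤ c + a then 1 else 0)]
  induction n with
  | zero => simp
  | succ n ih => rw [Finset.sum_range_succ, ih]; split_ifs <;> omega

namespace SymplecticChain

section Chains

variable {ι : Type*} (m : ι → ℕ) (glued : ι → Bool)

abbrev Cell := Σ i, Fin (m i)

variable {m} in
theorem Cell.mk_eq_mk_iff {i j : ι} {a : Fin (m i)} {b : Fin (m j)} :
    (⟨i, a⟩ : Cell m) = ⟨j, b⟩ ↔ i = j ∧ (a : ℕ) = b := by
  constructor
  · rintro ⟨⟩
    exact ⟨rfl, rfl⟩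
  · rintro ⟨rfl, h⟩
    rw [Fin.ext h]

/- Each index `i` contributes the cells `⟨i, a⟩`, `a < m i`, to both halves. `next` climbs the
`inl` copy and descends the `inr` copy; for a glued index the top of the `inl` chain continues
into the top of the `inr` chain, giving one chain of length `2 * m i` instead of two of
length `m i`. -/
def next : Cell m ⊕ Cell m → Option (Cell m ⊕ Cell m)
  | .inl ⟨i, a⟩ =>
    if h : a.1 + 1 < m i then some (.inl ⟨i, ⟨a + 1, h⟩⟩)
    else if glued i then some (.inr ⟨i, a⟩) else none
  | .inr ⟨i, a⟩ => if h : 0 < a.1 then some (.inr ⟨i, ⟨a - 1, by omega⟩⟩) else none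

def stepsLeft : Cell m ⊕ Cell m → ℕ
  | .inl ⟨i, a⟩ => (if glued i then m i else 0) + (m i - 1 - a)
  | .inr ⟨_, a⟩ => a

def chainLengths (i : ι) : Multiset ℕ := if glued i then {2 * m i} else {m i, m i}

variable {m glued}

theorem next_inl_eq_inl_iff {i j : ι} (a : Fin (m i)) (b : Fin (m j)) :
    next m glued (.inl ⟨i, a⟩) = some (.inl ⟨j, b⟩) ↔ i = j ∧ (b : ℕ) = a + 1 := by
  simp only [next]
  split_ifs <;>
    simp only [Option.some.injEq, Sum.inl.injEq, Cell.mk_eq_mk_iff, reduceCtorEq, false_iff,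
      not_and] <;>
    grind

theorem next_inl_eq_inr_iff {i j : ι} (a : Fin (m i)) (b : Fin (m j)) :
    next m glued (.inl ⟨i, a⟩) = some (.inr ⟨j, b⟩) ↔
      i = j ∧ (b : ℕ) = a ∧ (a : ℕ) + 1 = m i ∧ glued i = true := by
  simp only [next]
  split_ifs <;>
    simp only [Option.some.injEq, Sum.inr.injEq, Cell.mk_eq_mk_iff, reduceCtorEq, false_iff,
      not_and] <;>
    grind

theorem next_inr_eq_inr_iff {i j : ι} (a : Fin (m i)) (b : Fin (m j)) :
    next m glued (.inr ⟨i, a⟩) = some (.inr ⟨j, b⟩) ↔ i = j ∧ (a : ℕ) = b + 1 := by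
  simp only [next]
  split_ifs <;>
    simp only [Option.some.injEq, Sum.inr.injEq, Cell.mk_eq_mk_iff, false_iff, not_and] <;>
    grind

theorem next_inr_ne_inl (x y : Cell m) : next m glued (.inr x) ≠ some (.inl y) := by
  simp only [next]
  split_ifs <;> simp

theorem next_eq_some_inj :
    ∀ a b b', next m glued b = some a → next m glued b' = some a → b = b' := by
  rintro (⟨j, c⟩ | ⟨j, c⟩) (⟨i, x⟩ | ⟨i, x⟩) (⟨i', x'⟩ | ⟨i', x'⟩) h h' <;>
    have := x.isLt <;> have := x'.isLt <;>
    first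
    | exact absurd h (next_inr_ne_inl _ _)
    | exact absurd h' (next_inr_ne_inl _ _)
    | simp only [next_inl_eq_inl_iff, next_inl_eq_inr_iff, next_inr_eq_inr_iff] at h h'
      obtain ⟨rfl, h⟩ := h
      obtain ⟨rfl, h'⟩ := h'
      simp only [Sum.inl.injEq, Sum.inr.injEq, reduceCtorEq, Cell.mk_eq_mk_iff, true_and]
      omega

theorem stepsLeft_eq_zero_of_next_eq_none :
    ∀ b, next m glued b = none → stepsLeft m glued b = 0 := by
  rintro (⟨i, a⟩ | ⟨i, a⟩) h <;> simp only [next] at h <;> split_ifs at h <;>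
    simp_all [stepsLeft]

theorem stepsLeft_eq_succ_of_next_eq_some :
    ∀ b b', next m glued b = some b' → stepsLeft m glued b = stepsLeft m glued b' + 1 := by
  rintro (⟨i, a⟩ | ⟨i, a⟩) b' h <;> simp only [next] at h <;> split_ifs at h <;> cases h <;>
    have := a.isLt <;> simp only [stepsLeft, *, ↓reduceIte] <;> omega

variable [Fintype ι]

theorem card_stepsLeft_ge_eq_sum_chainLengths (j : ℕ) :
    (Finset.univ.filter fun b => j ≤ stepsLeft m glued b).card =
      ((∑ i, chainLengths m glued i).map (· - j)).sum := by
  rw [Multiset.sum_map_finset_sum, Finset.card_filter, Fintype.sum_sum_type, Fintype.sum_sigma,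
    Fintype.sum_sigma, ← Finset.sum_add_distrib]
  refine Finset.sum_congr rfl fun i _ => ?_
  have hinl : ∑ a : Fin (m i), (if j ≤ stepsLeft m glued (.inl ⟨i, a⟩) then 1 else 0) =
      m i - (j - if glued i then m i else 0) := by
    rw [← sum_fin_ite_le_add, ← Equiv.sum_comp Fin.revPerm]
    refine Fintype.sum_congr _ _ fun a => ?_
    simp only [stepsLeft, Fin.revPerm_apply, Fin.val_rev]
    split_ifs <;> first | rfl | omega
  have hinr : ∑ a : Fin (m i), (if j ≤ stepsLeft m glued (.inr ⟨i, a⟩) then 1 else 0) =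
      m i - j := by
    rw [← Nat.sub_zero j, ← sum_fin_ite_le_add, Nat.sub_zero]
    exact Fintype.sum_congr _ _ fun a => if_congr (by rw [zero_add]; rfl) rfl rfl
  rw [hinl, hinr]
  cases hg : glued i <;> simp [chainLengths, hg]
  omega

theorem sum_sum_chainLengths :
    (∑ i, chainLengths m glued i).sum = 2 * Fintype.card (Cell m) := by
  rw [← Multiset.map_id (∑ i, _), Multiset.sum_map_finset_sum, Fintype.card_sigma,
    Finset.mul_sum]
  refine Finset.sum_congr rfl fun i _ => ?_
  cases hg : glued i <;> simp [chainLengths, hg, two_mul]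

end Chains

section ChainMatrix

variable (k : Type*) [Field k] {ι : Type*} [DecidableEq ι] (m : ι → ℕ) (glued : ι → Bool)

/- The sign on the second half makes the lower-right block minus the transpose of the
upper-left one. -/
def chainMatrix : Matrix (Cell m ⊕ Cell m) (Cell m ⊕ Cell m) k :=
  weightedShift (next m glued) (Sum.elim (fun _ => 1) (fun _ => -1))

variable [Fintype ι]

theorem rank_chainMatrix_pow (j : ℕ) :
    (chainMatrix k m glued ^ j).rank = ((∑ i, chainLengths m glued i).map (· - j)).sum := by
  rw [chainMatrix, rank_weightedShift_pow _ _ (by rintro (_ | _) <;> simp) next_eq_some_inj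
    (stepsLeft m glued) stepsLeft_eq_zero_of_next_eq_none stepsLeft_eq_succ_of_next_eq_some,
    card_stepsLeft_ge_eq_sum_chainLengths]

theorem chainMatrix_mem_sp : chainMatrix k m glued ∈ LieAlgebra.Symplectic.sp (Cell m) k := by
  apply mem_sp_of_toBlocks
  · ext x y
    simp [chainMatrix, weightedShift, toBlocks₁₂, next_inr_ne_inl]
  · ext ⟨i, a⟩ ⟨j, b⟩
    simp only [chainMatrix, weightedShift, toBlocks₂₁, transpose_apply, of_apply,
      next_inl_eq_inr_iff]
    grind
  · ext ⟨i, a⟩ ⟨j, b⟩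
    simp [chainMatrix, weightedShift, toBlocks₂₂, toBlocks₁₁, next_inl_eq_inl_iff,
      next_inr_eq_inr_iff]
    grind

end ChainMatrix

end SymplecticChain

open SymplecticChain in
theorem exists_chainLengths_sum_eq (s : Multiset ℕ) (hodd : ∀ j, Odd j → Even (s.count j)) :
    ∃ (r : ℕ) (m : Fin r → ℕ) (glued : Fin r → Bool),
      ∑ i, chainLengths m glued i = s := by
  obtain ⟨w, hw⟩ := (s.filter (¬Even ·)).exists_smul_of_dvd_count (k := 2) fun a ha => by
    have ha' : ¬Even a := (Multiset.mem_filter.mp ha).2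
    rw [Multiset.count_filter, if_pos ha']
    exact even_iff_two_dvd.mp (hodd a (Nat.not_even_iff_odd.mp ha'))
  let piece : ℕ × Bool → Multiset ℕ := fun p => if p.2 then {2 * p.1} else {p.1, p.1}
  let P := (s.filter Even).map (fun x => (x / 2, true)) + w.map (·, false)
  have hevens : ((s.filter Even).map fun x => ({2 * (x / 2)} : Multiset ℕ)) =
      (s.filter Even).map ({·}) :=
    Multiset.map_congr rfl fun x hx => by
      rw [Nat.mul_div_cancel' (even_iff_two_dvd.mp (Multiset.of_mem_filter hx))]
  refine ⟨P.toList.length, fun i => P.toList[i].1, fun i => P.toList[i].2, ?_⟩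
  calc ∑ i, chainLengths _ _ i = (P.toList.map piece).sum := Fin.sum_univ_fun_getElem _ piece
    _ = (P.map piece).sum := by rw [← Multiset.sum_coe, ← Multiset.map_coe, Multiset.coe_toList]
    _ = s.filter Even + s.filter (¬Even ·) := by
      simp only [P, piece, Multiset.map_add, Multiset.map_map, Function.comp_def, ite_true,
        Bool.false_eq_true, ite_false, Multiset.sum_add, hevens, Multiset.insert_eq_cons,
        ← Multiset.singleton_add, Multiset.sum_map_add, Multiset.sum_map_singleton, hw, two_nsmul]
    _ = s := Multiset.filter_add_not _ s

open SymplecticChain in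
theorem stmt3_general (k : Type) [Field k] (n : ℕ)
    (μ : Nat.Partition (2 * n)) (hodd : ∀ j : ℕ, Odd j → Even (μ.parts.count j)) :
    ∃ X : Matrix (Fin (2 * n)) (Fin (2 * n)) k,
      Xᵀ * sympJ k n + sympJ k n * X = 0 ∧ IsNilpotent X ∧ HasJordanType k X μ := by
  obtain ⟨r, m, glued, hparts⟩ := exists_chainLengths_sum_eq μ.parts hodd
  have hcard : Fintype.card (Cell m) = n := by
    have := sum_sum_chainLengths (m := m) (glued := glued)
    rw [hparts, μ.parts_sum] at this
    omega
  obtain ⟨X, hX, hrank⟩ := exists_sympJ_of_mem_sp hcard _ (chainMatrix_mem_sp k m glued)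
  have hrank_pow : ∀ j, (X ^ j).rank = (μ.parts.map (· - j)).sum := fun j => by
    rw [hrank, rank_chainMatrix_pow, hparts]
  exact ⟨X, hX, isNilpotent_of_rank_pow_eq X μ hrank_pow,
    hasJordanType_of_rank_pow_eq X μ hrank_pow⟩

/-- If `μ` is a partition of `2n` in which every odd part occurs with even multiplicity,
then there is a nilpotent `X ∈ sp_{2n}(k)` of Jordan type `μ` (char k = 0). -/
theorem stmt3 (k : Type) [Field k] [CharZero k] (n : ℕ) (hn : 1 ≤ n)
    (μ : Nat.Partition (2 * n)) (hodd : ∀ j : ℕ, Odd j → Even (μ.parts.count j)) :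
    ∃ X : Matrix (Fin (2 * n)) (Fin (2 * n)) k,
      Xᵀ * sympJ k n + sympJ k n * X = 0 ∧ IsNilpotent X ∧ HasJordanType k X μ :=
  stmt3_general k n μ hodd
end

section
/- Let k be a field of characteristic zero, n ≥ 2, and λ a partition of n with m = gcd(λ). Then the set of determinants of matrices g ∈ GL_n(k) that commute simultaneously with J_λ, H_λ and Y_λ is exactly the group (k^×)^m of m-th powers in k^×. -/
open Matrix

/-- Given the list of block sizes `L` and a (0-based) index `i`, return the pair
`(s, pos)` where `s` is the size of the block containing index `i` and `pos` is the
position of `i` within that block. -/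
def blockFind : List ℕ → ℕ → ℕ × ℕ
  | [], i => (0, i)
  | s :: L, i => if i < s then (s, i) else blockFind L (i - s)

/-- The list of parts of a partition, in weakly decreasing order. -/
def partsList {n : ℕ} (μ : Nat.Partition n) : List ℕ :=
  (μ.parts.sort (· ≤ ·)).reverse

/-- The nilpotent Jordan matrix `J_μ` associated to a partition `μ` of `n`. -/
def jordanMat (k : Type) [Field k] {n : ℕ} (μ : Nat.Partition n) :
    Matrix (Fin n) (Fin n) k :=
  fun i j =>
    if (j : ℕ) = (i : ℕ) + 1 ∧
        (blockFind (partsList μ) (i : ℕ)).2 + 1 < (blockFind (partsList μ) (i : ℕ)).1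
    then 1 else 0

/-- The semisimple element `H_μ`: block diagonal with blocks
`H_s = diag(s-1, s-3, …, 1-s)` for each part `s` of `μ`, in weakly decreasing order. -/
def hMat (k : Type) [Field k] {n : ℕ} (μ : Nat.Partition n) :
    Matrix (Fin n) (Fin n) k :=
  fun i j =>
    if i = j then
      ((((blockFind (partsList μ) (i : ℕ)).1 : ℤ) - 1 -
          2 * ((blockFind (partsList μ) (i : ℕ)).2 : ℤ) : ℤ) : k)
    else 0

/-- The lower triangular element `Y_μ`: block diagonal with blocks `Y_s`, where `Y_s`
has `(i+1, i)` entry `i (s - i)` for `1 ≤ i ≤ s - 1` and all other entries zero. -/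
def yMat (k : Type) [Field k] {n : ℕ} (μ : Nat.Partition n) :
    Matrix (Fin n) (Fin n) k :=
  fun i j =>
    if (i : ℕ) = (j : ℕ) + 1 ∧
        (blockFind (partsList μ) (j : ℕ)).2 + 1 < (blockFind (partsList μ) (j : ℕ)).1
    then ((((blockFind (partsList μ) (j : ℕ)).2 + 1) *
        ((blockFind (partsList μ) (j : ℕ)).1 - ((blockFind (partsList μ) (j : ℕ)).2 + 1)) : ℕ) : k)
    else 0

/-!
Commuting with `H_λ`, the matrix `g` preserves the weight `s - 1 - 2p` of an index at position
`p` of a block of size `s`. Commuting also with `J_λ`, the part of `g` between a block of size `s`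
and one of size `t` is a weight-preserving intertwiner of `J_s` and `J_t`, hence a scalar if
`s = t` and zero otherwise. Grouping the indices by `(s, p)`, the matrix `g` is therefore block
diagonal, and its `(s, p)` block is a copy of its `(s, 0)` block; so `det g = ∏ₛ Dₛ ^ s`,
where `Dₛ ≠ 1` only when `s` is a part of `λ`, hence a multiple of `m = gcd λ`.
Conversely, the diagonal matrix equal to `c ^ aᵦ` on the `b`-th block commutes with `J_λ`,
`H_λ` and `Y_λ`, and has determinant `c ^ ∑ λᵦ aᵦ = c ^ m` for Bézout coefficients `aᵦ`.
-/

theorem Finset.prod_pow_eq_pow_of_dvd {ι M : Type*} [CommMonoid M] (s : Finset ι) (D : ι → M)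
    (w : ι → ℕ) {m : ℕ} (h : ∀ i ∈ s, D i ≠ 1 → m ∣ w i) :
    ∏ i ∈ s, D i ^ w i = (∏ i ∈ s, D i ^ (w i / m)) ^ m := by
  rw [← Finset.prod_pow]
  refine Finset.prod_congr rfl fun i hi => ?_
  by_cases hD : D i = 1
  · simp [hD]
  · rw [← pow_mul, Nat.div_mul_cancel (h i hi hD)]

theorem Finset.prod_zpow_eq_zpow_sum {G ι : Type*} [CommGroup G] (a : G) (s : Finset ι)
    (f : ι → ℤ) : ∏ i ∈ s, a ^ f i = a ^ (∑ i ∈ s, f i) := by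
  have := map_prod (zpowersHom G a) (fun i => Multiplicative.ofAdd (f i)) s
  rw [← ofAdd_sum] at this
  exact this.symm

theorem List.exists_sum_zipWith_eq_of_gcd_dvd (L : List ℕ) {z : ℤ}
    (hz : ((L : Multiset ℕ).gcd : ℤ) ∣ z) :
    ∃ A : List ℤ, (List.zipWith (fun (s : ℕ) (a : ℤ) => (s : ℤ) * a) L A).sum = z := by
  induction L generalizing z with
  | nil => exact ⟨[], by simpa [eq_comm] using hz⟩
  | cons s L ih =>
    obtain ⟨t, rfl⟩ := hz
    set d := (L : Multiset ℕ).gcd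
    obtain ⟨A, hA⟩ := ih (z := d * (Nat.gcdB s d * t)) (dvd_mul_right _ _)
    refine ⟨Nat.gcdA s d * t :: A, ?_⟩
    have hgcd : ((s :: L : List ℕ) : Multiset ℕ).gcd = Nat.gcd s d := by
      rw [← Multiset.cons_coe, Multiset.gcd_cons]
      rfl
    rw [List.zipWith_cons_cons, List.sum_cons, hA, hgcd, Nat.gcd_eq_gcd_ab]
    ring

theorem Matrix.diagonal_mul_eq_mul_diagonal {ι α : Type*} [Fintype ι] [DecidableEq ι]
    [NonUnitalNonAssocCommSemiring α] {d : ι → α} {A : Matrix ι ι α}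
    (h : ∀ i j, A i j ≠ 0 → d i = d j) : diagonal d * A = A * diagonal d := by
  ext i j
  rw [diagonal_mul, mul_diagonal]
  by_cases hA : A i j = 0
  · simp [hA]
  · rw [h i j hA, mul_comm]

namespace Matrix

variable {α : Type*} {n : ℕ}

/-- Extending the entries by zero lets index shifts `a + 1`, `a - p` be written without bound
proofs. -/
def natEntry [Zero α] (g : Matrix (Fin n) (Fin n) α) (a b : ℕ) : α :=
  if h : a < n ∧ b < n then g ⟨a, h.1⟩ ⟨b, h.2⟩ else 0

@[simp]
theorem natEntry_val [Zero α] (g : Matrix (Fin n) (Fin n) α) (i j : Fin n) :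
    g.natEntry i j = g i j := by
  simp [natEntry]

variable [NonUnitalNonAssocSemiring α] {A B : Matrix (Fin n) (Fin n) α}

theorem mul_apply_eq_natEntry_mul {i j : Fin n} {c : ℕ} {x : α}
    (hB : ∀ l : Fin n, B l j = if (l : ℕ) = c then x else 0) :
    (A * B) i j = A.natEntry i c * x := by
  simp_rw [mul_apply, hB, mul_ite, mul_zero, ← natEntry_val A i]
  rw [Fin.sum_univ_eq_sum_range (fun l => if l = c then A.natEntry i l * x else 0),
    Finset.sum_ite_eq']
  split_ifs with hc
  · rfl
  · simp [natEntry, Finset.mem_range.not.1 hc]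

theorem mul_apply_eq_mul_natEntry {i j : Fin n} {c : ℕ} {x : α}
    (hA : ∀ l : Fin n, A i l = if (l : ℕ) = c then x else 0) :
    (A * B) i j = x * B.natEntry c j := by
  simp_rw [mul_apply, hA, ite_mul, zero_mul, ← natEntry_val B _ j]
  rw [Fin.sum_univ_eq_sum_range (fun l => if l = c then x * B.natEntry l j else 0),
    Finset.sum_ite_eq']
  split_ifs with hc
  · rfl
  · simp [natEntry, Finset.mem_range.not.1 hc]

end Matrix

/-- `hdiag`, `hcol` and `hrow` say that the `s × t` array `M` satisfies `J_s M = M J_t`, and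
`hwt` that it maps the `H_t`-weight `t - 1 - 2q` to the same `H_s`-weight. -/
theorem eq_ite_of_jordan_intertwiner {α : Type*} [Zero α] {s t : ℕ} {M : ℕ → ℕ → α}
    (hwt : ∀ p q, p < s → q < t → M p q ≠ 0 → (s : ℤ) - 2 * p = t - 2 * q)
    (hdiag : ∀ p q, p + 1 < s → q + 1 < t → M (p + 1) (q + 1) = M p q)
    (hcol : ∀ p, p + 1 < s → M (p + 1) 0 = 0)
    (hrow : ∀ q, q + 1 < t → M (s - 1) q = 0)
    {p q : ℕ} (hp : p < s) (hq : q < t) :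
    M p q = if s = t ∧ p = q then M 0 0 else 0 := by
  have hshift : ∀ d p q, p + d < s → q + d < t → M (p + d) (q + d) = M p q := by
    intro d
    induction d with
    | zero => simp
    | succ d ih =>
      intro p q hp hq
      rw [← add_assoc, ← add_assoc, hdiag _ _ (by omega) (by omega),
        ih _ _ (by omega) (by omega)]
  split_ifs with h
  · obtain ⟨rfl, rfl⟩ := h
    simpa using hshift p 0 0 (by omega) (by omega)
  by_contra hne
  -- off the diagonal, `hw` lets the diagonal through `(p, q)` reach the first column of `M`
  -- (if `q < p`) or its last row (if `p < q`) inside the array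
  have hw := hwt p q hp hq hne
  rcases lt_trichotomy q p with hqp | rfl | hpq
  · have h1 := hshift q (p - q) 0 (by omega) (by omega)
    have h2 := hcol (p - q - 1) (by omega)
    rw [show p - q - 1 + 1 = p - q by omega] at h2
    rw [show p - q + q = p by omega, zero_add, h2] at h1
    exact hne h1
  · exact h ⟨by omega, rfl⟩
  · have h1 := hshift (s - 1 - p) p q (by omega) (by omega)
    rw [show p + (s - 1 - p) = s - 1 by omega, hrow _ (by omega)] at h1
    exact hne h1.symm

theorem blockFind_snd_le (L : List ℕ) (i : ℕ) : (blockFind L i).2 ≤ i := by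
  induction L generalizing i with
  | nil => simp [blockFind]
  | cons s L ih =>
    unfold blockFind
    split_ifs
    · exact le_rfl
    · exact (ih _).trans (Nat.sub_le _ _)

theorem blockFind_snd_lt_fst {L : List ℕ} (hL : ∀ x ∈ L, 0 < x) {i : ℕ} (hi : i < L.sum) :
    (blockFind L i).2 < (blockFind L i).1 := by
  induction L generalizing i with
  | nil => simp at hi
  | cons s L ih =>
    rw [List.sum_cons] at hi
    unfold blockFind
    split_ifs with h
    · exact h
    · exact ih (fun x hx => hL x (List.mem_cons_of_mem _ hx)) (by omega)

theorem blockFind_fst_mem {L : List ℕ} {i : ℕ} (hi : i < L.sum) : (blockFind L i).1 ∈ L := by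
  induction L generalizing i with
  | nil => simp at hi
  | cons s L ih =>
    rw [List.sum_cons] at hi
    unfold blockFind
    split_ifs
    · exact List.mem_cons_self
    · exact List.mem_cons_of_mem _ (ih (by omega))

theorem blockFind_sub_snd_add {L : List ℕ} {i q : ℕ} (hq : q < (blockFind L i).1) :
    blockFind L (i - (blockFind L i).2 + q) = ((blockFind L i).1, q) := by
  induction L generalizing i with
  | nil => simp [blockFind] at hq
  | cons s L ih =>
    have hcons (j : ℕ) :
        blockFind (s :: L) j = if j < s then (s, j) else blockFind L (j - s) := rfl
    by_cases hi : i < s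
    · rw [hcons i, if_pos hi] at hq ⊢
      rw [hcons, if_pos (by omega), Nat.sub_self, zero_add]
    · rw [hcons i, if_neg hi] at hq ⊢
      have := blockFind_snd_le L (i - s)
      rw [hcons, if_neg (by omega), ← ih hq]
      congr 1
      omega

theorem sub_blockFind_snd_add_fst_le_sum {L : List ℕ} {i : ℕ} (hi : i < L.sum) :
    i - (blockFind L i).2 + (blockFind L i).1 ≤ L.sum := by
  induction L generalizing i with
  | nil => simp at hi
  | cons s L ih =>
    rw [List.sum_cons] at hi ⊢
    unfold blockFind
    split_ifs with h
    · omega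
    · have := ih (i := i - s) (by omega)
      have := blockFind_snd_le L (i - s)
      omega

def blockCoeff : List ℤ → List ℕ → ℕ → ℤ
  | a :: A, s :: L, i => if i < s then a else blockCoeff A L (i - s)
  | _, _, _ => 0

theorem blockCoeff_succ {A : List ℤ} {L : List ℕ} {i : ℕ}
    (h : (blockFind L i).2 + 1 < (blockFind L i).1) :
    blockCoeff A L (i + 1) = blockCoeff A L i := by
  induction L generalizing A i with
  | nil => simp [blockFind] at h
  | cons s L ih =>
    cases A with
    | nil => simp [blockCoeff]
    | cons a A =>
      unfold blockFind at h
      by_cases hi : i < s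
      · rw [if_pos hi] at h
        simp [blockCoeff, hi, h]
      · rw [if_neg hi] at h
        simp only [blockCoeff, if_neg hi, if_neg (show ¬ i + 1 < s by omega),
          show i + 1 - s = i - s + 1 by omega, ih h]

theorem sum_range_blockCoeff (A : List ℤ) (L : List ℕ) :
    ∑ i ∈ Finset.range L.sum, blockCoeff A L i =
      (List.zipWith (fun (s : ℕ) (a : ℤ) => (s : ℤ) * a) L A).sum := by
  induction L generalizing A with
  | nil => simp
  | cons s L ih =>
    cases A with
    | nil => simp [blockCoeff]
    | cons a A =>
      rw [List.sum_cons, Finset.sum_range_add, List.zipWith_cons_cons, List.sum_cons, ← ih A]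
      congr 1
      · rw [Finset.sum_congr rfl fun i hi =>
          show blockCoeff (a :: A) (s :: L) i = a from if_pos (Finset.mem_range.1 hi)]
        simp [mul_comm]
      · refine Finset.sum_congr rfl fun i _ => ?_
        simp [blockCoeff]

namespace Nat.Partition

variable {n : ℕ} (μ : Nat.Partition n)

theorem mem_partsList {x : ℕ} : x ∈ partsList μ ↔ x ∈ μ.parts := by
  rw [partsList, List.mem_reverse, ← Multiset.mem_coe, Multiset.sort_eq]

theorem coe_partsList : (partsList μ : Multiset ℕ) = μ.parts := by
  rw [partsList, Multiset.coe_reverse, Multiset.sort_eq]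

theorem sum_partsList : (partsList μ).sum = n := by
  rw [← Multiset.sum_coe, coe_partsList, μ.parts_sum]

def blockSize (a : ℕ) : ℕ := (blockFind (partsList μ) a).1

/-- Position of `a` inside its block, counted from `0`. -/
def blockPos (a : ℕ) : ℕ := (blockFind (partsList μ) a).2

variable {μ}

theorem blockPos_le (a : ℕ) : μ.blockPos a ≤ a := blockFind_snd_le _ a

theorem blockPos_lt_blockSize {a : ℕ} (ha : a < n) : μ.blockPos a < μ.blockSize a :=
  blockFind_snd_lt_fst (fun _ hx => μ.parts_pos ((mem_partsList μ).1 hx))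
    (by rwa [sum_partsList])

theorem blockSize_mem_parts {a : ℕ} (ha : a < n) : μ.blockSize a ∈ μ.parts :=
  (mem_partsList μ).1 (blockFind_fst_mem (by rwa [sum_partsList]))

theorem blockSize_le {a : ℕ} (ha : a < n) : μ.blockSize a ≤ n :=
  le_of_mem_parts (blockSize_mem_parts ha)

theorem sub_blockPos_add_blockSize_le {a : ℕ} (ha : a < n) :
    a - μ.blockPos a + μ.blockSize a ≤ n := by
  have h := sub_blockFind_snd_add_fst_le_sum (L := partsList μ) (i := a) (by rwa [sum_partsList])
  rwa [sum_partsList] at h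

theorem blockSize_sub_blockPos_add {a q : ℕ} (hq : q < μ.blockSize a) :
    μ.blockSize (a - μ.blockPos a + q) = μ.blockSize a :=
  (congrArg Prod.fst (blockFind_sub_snd_add hq)).trans rfl

theorem blockPos_sub_blockPos_add {a q : ℕ} (hq : q < μ.blockSize a) :
    μ.blockPos (a - μ.blockPos a + q) = q :=
  (congrArg Prod.snd (blockFind_sub_snd_add hq)).trans rfl

theorem sub_blockPos_add_lt {a q : ℕ} (ha : a < n) (hq : q < μ.blockSize a) :
    a - μ.blockPos a + q < n := by
  have := sub_blockPos_add_blockSize_le (μ := μ) ha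
  omega

theorem succ_lt_of_blockPos_succ_lt {a : ℕ} (ha : a < n)
    (h : μ.blockPos a + 1 < μ.blockSize a) : a + 1 < n := by
  have := sub_blockPos_add_lt ha h
  have := blockPos_le (μ := μ) a
  omega

theorem blockPos_succ {a : ℕ} (h : μ.blockPos a + 1 < μ.blockSize a) :
    μ.blockPos (a + 1) = μ.blockPos a + 1 := by
  have hpos := blockPos_sub_blockPos_add h
  have := blockPos_le (μ := μ) a
  rwa [show a - μ.blockPos a + (μ.blockPos a + 1) = a + 1 by omega] at hpos

theorem gcd_dvd_blockSize {a : ℕ} (ha : a < n) : μ.parts.gcd ∣ μ.blockSize a :=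
  Multiset.gcd_dvd (blockSize_mem_parts ha)

variable (μ) in
def blockClass (i : Fin n) : Fin (n + 1) ×ₗ Fin (n + 1) :=
  toLex (⟨μ.blockSize i, Nat.lt_succ_of_le (blockSize_le i.isLt)⟩,
    ⟨μ.blockPos i,
      Nat.lt_succ_of_le ((blockPos_lt_blockSize i.isLt).le.trans (blockSize_le i.isLt))⟩)

theorem blockClass_eq_toLex_iff {i : Fin n} {s p : Fin (n + 1)} :
    μ.blockClass i = toLex (s, p) ↔ μ.blockSize i = s ∧ μ.blockPos i = p := by
  rw [blockClass, toLex.injective.eq_iff, Prod.mk.injEq, Fin.ext_iff, Fin.ext_iff]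

def blockClassShift (s p : Fin (n + 1)) (hp : p < s) :
    {i // μ.blockClass i = toLex (s, p)} ≃ {i // μ.blockClass i = toLex (s, 0)} where
  toFun i :=
    have hi := blockClass_eq_toLex_iff.1 i.2
    have h0 : 0 < μ.blockSize i := by omega
    ⟨⟨i.1 - p, by omega⟩, blockClass_eq_toLex_iff.2 (by
      simpa only [← hi.2, add_zero, Fin.val_zero] using
        And.intro ((blockSize_sub_blockPos_add h0).trans hi.1) (blockPos_sub_blockPos_add h0))⟩
  invFun j :=
    have hj := blockClass_eq_toLex_iff.1 j.2
    have hp' : (p : ℕ) < μ.blockSize j := by rw [hj.1]; exact hp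
    ⟨⟨j.1 + p, by simpa [hj.2] using sub_blockPos_add_lt j.1.isLt hp'⟩,
      blockClass_eq_toLex_iff.2 (by
      simpa only [hj.2, Fin.val_zero, Nat.sub_zero] using
        And.intro ((blockSize_sub_blockPos_add hp').trans hj.1) (blockPos_sub_blockPos_add hp'))⟩
  left_inv i := by
    have := (blockClass_eq_toLex_iff.1 i.2).2 ▸ blockPos_le (μ := μ) i.1
    ext
    simp only
    omega
  right_inv j := by
    ext
    simp

end Nat.Partition

open Nat.Partition

section Commutant

variable {k : Type} [Field k] {n : ℕ} {μ : Nat.Partition n} {g : Matrix (Fin n) (Fin n) k}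

theorem jordanMat_apply_eq_ite_succ (i l : Fin n) :
    jordanMat k μ i l =
      if (l : ℕ) = i + 1 then (if μ.blockPos i + 1 < μ.blockSize i then 1 else 0) else 0 := by
  unfold jordanMat
  split_ifs <;> first | rfl | tauto

theorem jordanMat_apply_eq_ite_pred (l j : Fin n) :
    jordanMat k μ l j =
      if (l : ℕ) = j - 1 then
        (if 1 ≤ (j : ℕ) ∧ μ.blockPos (j - 1) + 1 < μ.blockSize (j - 1) then 1 else 0)
      else 0 := by
  unfold jordanMat
  by_cases h : (j : ℕ) = l + 1
  · rw [if_pos (show (l : ℕ) = j - 1 by omega)]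
    simp only [h, Nat.add_sub_cancel, true_and, Nat.le_add_left]
    rfl
  · rw [if_neg (by tauto)]
    split_ifs <;> first | rfl | omega

theorem mul_jordanMat_apply (i j : Fin n) :
    (g * jordanMat k μ) i j =
      if 1 ≤ (j : ℕ) ∧ μ.blockPos (j - 1) + 1 < μ.blockSize (j - 1) then
        g.natEntry i (j - 1)
      else 0 := by
  rw [mul_apply_eq_natEntry_mul (fun l => jordanMat_apply_eq_ite_pred l j), mul_ite, mul_one,
    mul_zero]

theorem jordanMat_mul_apply (i j : Fin n) :
    (jordanMat k μ * g) i j =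
      if μ.blockPos i + 1 < μ.blockSize i then g.natEntry (i + 1) j else 0 := by
  rw [mul_apply_eq_mul_natEntry (jordanMat_apply_eq_ite_succ i), ite_mul, one_mul, zero_mul]

theorem natEntry_ite_eq_of_commute_jordanMat (hJ : g * jordanMat k μ = jordanMat k μ * g)
    {a b : ℕ} (ha : a < n) (hb : b + 1 < n) :
    (if μ.blockPos b + 1 < μ.blockSize b then g.natEntry a b else 0) =
      if μ.blockPos a + 1 < μ.blockSize a then g.natEntry (a + 1) (b + 1) else 0 := by
  have h := congrFun (congrFun hJ ⟨a, ha⟩) ⟨b + 1, hb⟩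
  simpa only [mul_jordanMat_apply, jordanMat_mul_apply, Nat.add_sub_cancel, Nat.le_add_left,
    true_and] using h

theorem natEntry_succ_eq_zero_of_commute_jordanMat (hJ : g * jordanMat k μ = jordanMat k μ * g)
    {a b : ℕ} (ha : a < n) (hb : b < n) (ha' : μ.blockPos a + 1 < μ.blockSize a)
    (hb' : μ.blockPos b = 0) : g.natEntry (a + 1) b = 0 := by
  have h := congrFun (congrFun hJ ⟨a, ha⟩) ⟨b, hb⟩
  rw [mul_jordanMat_apply, jordanMat_mul_apply, if_pos ha', if_neg] at h
  · exact h.symm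
  · rintro ⟨hb1, hcont⟩
    have := blockPos_succ hcont
    rw [Nat.sub_add_cancel hb1] at this
    simp only at this
    omega

theorem hMat_eq_diagonal :
    hMat k μ =
      diagonal fun i : Fin n => (((μ.blockSize i : ℤ) - 1 - 2 * μ.blockPos i : ℤ) : k) := by
  ext i j
  simp only [hMat, diagonal_apply]
  rfl

theorem weight_eq_of_commute_hMat [CharZero k] (hH : g * hMat k μ = hMat k μ * g)
    {a b : ℕ} (ha : a < n) (hb : b < n) (hab : g.natEntry a b ≠ 0) :
    (μ.blockSize a : ℤ) - 2 * μ.blockPos a = μ.blockSize b - 2 * μ.blockPos b := by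
  have h := congrFun (congrFun hH ⟨a, ha⟩) ⟨b, hb⟩
  rw [hMat_eq_diagonal, mul_diagonal, diagonal_mul, mul_comm (g _ _)] at h
  have hab' : g ⟨a, ha⟩ ⟨b, hb⟩ ≠ 0 := by simpa [natEntry, ha, hb] using hab
  have := Int.cast_injective (mul_right_cancel₀ hab' h)
  simp only at this
  omega

theorem natEntry_eq_ite_of_commute [CharZero k] (hJ : g * jordanMat k μ = jordanMat k μ * g)
    (hH : g * hMat k μ = hMat k μ * g) {a b : ℕ} (ha : a < n) (hb : b < n) :
    g.natEntry a b =
      if μ.blockSize a = μ.blockSize b ∧ μ.blockPos a = μ.blockPos b then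
        g.natEntry (a - μ.blockPos a) (b - μ.blockPos b)
      else 0 := by
  have key := eq_ite_of_jordan_intertwiner
    (M := fun p q => g.natEntry (a - μ.blockPos a + p) (b - μ.blockPos b + q))
    (s := μ.blockSize a) (t := μ.blockSize b) ?_ ?_ ?_ ?_
    (blockPos_lt_blockSize ha) (blockPos_lt_blockSize hb)
  · simpa only [Nat.sub_add_cancel (blockPos_le _), add_zero] using key
  · intro p q hp hq hpq
    have := weight_eq_of_commute_hMat hH (sub_blockPos_add_lt ha hp) (sub_blockPos_add_lt hb hq)
      hpq
    simpa only [blockSize_sub_blockPos_add, blockPos_sub_blockPos_add, hp, hq] using this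
  · intro p q hp hq
    have hp' : p < μ.blockSize a := by omega
    have hq' : q < μ.blockSize b := by omega
    have hy : b - μ.blockPos b + q + 1 < n :=
      succ_lt_of_blockPos_succ_lt (μ := μ) (sub_blockPos_add_lt hb hq')
      (by simpa only [blockSize_sub_blockPos_add, blockPos_sub_blockPos_add, hq'] using hq)
    have := natEntry_ite_eq_of_commute_jordanMat hJ (sub_blockPos_add_lt ha hp') hy
    simpa only [blockSize_sub_blockPos_add, blockPos_sub_blockPos_add, hp', hq', hp, hq, if_true,
      ← add_assoc] using this.symm
  · intro p hp
    have hp' : p < μ.blockSize a := by omega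
    have h0 : 0 < μ.blockSize b := Nat.zero_lt_of_lt (blockPos_lt_blockSize hb)
    refine natEntry_succ_eq_zero_of_commute_jordanMat (a := a - μ.blockPos a + p)
      (b := b - μ.blockPos b + 0) hJ
      (sub_blockPos_add_lt ha hp') (sub_blockPos_add_lt hb h0) ?_ (blockPos_sub_blockPos_add h0)
    simpa only [blockSize_sub_blockPos_add, blockPos_sub_blockPos_add, hp'] using hp
  · intro q hq
    have hs : μ.blockSize a - 1 < μ.blockSize a := by
      have := blockPos_lt_blockSize (μ := μ) ha
      omega
    have hq' : q < μ.blockSize b := by omega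
    have hy : b - μ.blockPos b + q + 1 < n :=
      succ_lt_of_blockPos_succ_lt (μ := μ) (sub_blockPos_add_lt hb hq')
      (by simpa only [blockSize_sub_blockPos_add, blockPos_sub_blockPos_add, hq'] using hq)
    have := natEntry_ite_eq_of_commute_jordanMat hJ (sub_blockPos_add_lt ha hs) hy
    simpa only [blockSize_sub_blockPos_add, blockPos_sub_blockPos_add, hs, hq', hq, if_true,
      if_neg (show ¬ μ.blockSize a - 1 + 1 < μ.blockSize a by omega)] using this

theorem toSquareBlock_blockClass_eq_submatrix [CharZero k]
    (hJ : g * jordanMat k μ = jordanMat k μ * g) (hH : g * hMat k μ = hMat k μ * g)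
    {s p : Fin (n + 1)} (hp : p < s) :
    g.toSquareBlock μ.blockClass (toLex (s, p)) =
      (g.toSquareBlock μ.blockClass (toLex (s, 0))).submatrix (blockClassShift s p hp)
        (blockClassShift s p hp) := by
  ext i j
  obtain ⟨hi, hi'⟩ := blockClass_eq_toLex_iff.1 i.2
  obtain ⟨hj, hj'⟩ := blockClass_eq_toLex_iff.1 j.2
  have := natEntry_eq_ite_of_commute hJ hH i.1.isLt j.1.isLt
  rw [if_pos ⟨hi.trans hj.symm, hi'.trans hj'.symm⟩, natEntry_val, hi', hj'] at this
  rw [natEntry,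
    dif_pos ⟨(Nat.sub_le _ _).trans_lt i.1.isLt, (Nat.sub_le _ _).trans_lt j.1.isLt⟩] at this
  simpa [toSquareBlock_def, blockClassShift] using this

theorem det_eq_prod_det_toSquareBlock_pow [CharZero k]
    (hJ : g * jordanMat k μ = jordanMat k μ * g) (hH : g * hMat k μ = hMat k μ * g) :
    g.det =
      ∏ s : Fin (n + 1), (g.toSquareBlock μ.blockClass (toLex (s, 0))).det ^ (s : ℕ) := by
  have hblock : BlockTriangular g μ.blockClass := by
    intro i j hij
    have := natEntry_eq_ite_of_commute hJ hH i.isLt j.isLt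
    rwa [if_neg, natEntry_val] at this
    intro h
    exact hij.ne (by simp only [blockClass, h.1, h.2])
  rw [hblock.det_fintype, ← (toLex : Fin (n + 1) × Fin (n + 1) ≃ _).prod_comp,
    Fintype.prod_prod_type]
  refine Finset.prod_congr rfl fun s _ => ?_
  calc ∏ p : Fin (n + 1), (g.toSquareBlock μ.blockClass (toLex (s, p))).det
      = ∏ p : Fin (n + 1),
          if p < s then (g.toSquareBlock μ.blockClass (toLex (s, 0))).det else 1 := by
        refine Finset.prod_congr rfl fun p _ => ?_
        split_ifs with hp
        · rw [toSquareBlock_blockClass_eq_submatrix hJ hH hp, det_submatrix_equiv_self]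
        · have : IsEmpty {i // μ.blockClass i = toLex (s, p)} := ⟨fun i => by
            have := blockClass_eq_toLex_iff.1 i.2
            have := blockPos_lt_blockSize (μ := μ) i.1.isLt
            simp only [not_lt, Fin.le_def] at hp
            omega⟩
          exact det_isEmpty
    _ = _ := by
        rw [Finset.prod_ite, Finset.prod_const, Finset.prod_const_one, mul_one,
          Finset.filter_gt_eq_Iio, Fin.card_Iio]

theorem exists_det_eq_pow_gcd_of_commute [CharZero k] (hg : IsUnit g)
    (hJ : g * jordanMat k μ = jordanMat k μ * g) (hH : g * hMat k μ = hMat k μ * g) :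
    ∃ c : k, c ≠ 0 ∧ g.det = c ^ μ.parts.gcd := by
  set D : Fin (n + 1) → k := fun s => (g.toSquareBlock μ.blockClass (toLex (s, 0))).det
  have hdvd : ∀ s ∈ Finset.univ, D s ≠ 1 → μ.parts.gcd ∣ s := by
    intro s _ hs
    by_contra hdvd
    have : IsEmpty {i // μ.blockClass i = toLex (s, 0)} := ⟨fun i =>
      hdvd ((blockClass_eq_toLex_iff.1 i.2).1 ▸ gcd_dvd_blockSize i.1.isLt)⟩
    exact hs det_isEmpty
  have hdet := (det_eq_prod_det_toSquareBlock_pow hJ hH).trans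
    (Finset.prod_pow_eq_pow_of_dvd _ D _ hdvd)
  refine ⟨_, fun hc => ?_, hdet⟩
  rcases eq_or_ne μ.parts.gcd 0 with hm | hm
  · -- `s / 0 = 0`, so the witness is the empty-exponent product `1`
    simp [hm] at hc
  · exact ((isUnit_iff_isUnit_det g).1 hg).ne_zero (by rw [hdet, hc, zero_pow hm])

end Commutant

theorem exists_commute_det_eq_pow_gcd {k : Type} [Field k] {n : ℕ} (μ : Nat.Partition n)
    {c : k} (hc : c ≠ 0) :
    ∃ g : Matrix (Fin n) (Fin n) k, IsUnit g ∧
      g * jordanMat k μ = jordanMat k μ * g ∧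
      g * hMat k μ = hMat k μ * g ∧
      g * yMat k μ = yMat k μ * g ∧ g.det = c ^ μ.parts.gcd := by
  obtain ⟨A, hA⟩ := (partsList μ).exists_sum_zipWith_eq_of_gcd_dvd (z := μ.parts.gcd)
    (by rw [coe_partsList])
  set u := Units.mk0 c hc
  set x : ℕ → ℤ := blockCoeff A (partsList μ)
  have hx {a : ℕ} (h : μ.blockPos a + 1 < μ.blockSize a) : x (a + 1) = x a := blockCoeff_succ h
  have hprod (s : Finset (Fin n)) :
      ∏ i ∈ s, ((u ^ x i : kˣ) : k) = ((u ^ ∑ i ∈ s, x i : kˣ) : k) := by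
    rw [← Finset.prod_zpow_eq_zpow_sum, Units.coe_prod]
  refine ⟨diagonal fun i => ((u ^ x i : kˣ) : k), ?_, ?_, ?_, ?_, ?_⟩
  · rw [isUnit_iff_isUnit_det, det_diagonal, hprod]
    exact Units.isUnit _
  · refine diagonal_mul_eq_mul_diagonal fun i j hij => ?_
    obtain ⟨hji, hcont⟩ : (j : ℕ) = i + 1 ∧ μ.blockPos i + 1 < μ.blockSize i := by
      by_contra h
      exact hij (if_neg h)
    rw [hji, hx hcont]
  · refine diagonal_mul_eq_mul_diagonal fun i j hij => ?_
    obtain rfl : i = j := by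
      by_contra h
      exact hij (if_neg h)
    rfl
  · refine diagonal_mul_eq_mul_diagonal fun i j hij => ?_
    obtain ⟨hij', hcont⟩ : (i : ℕ) = j + 1 ∧ μ.blockPos j + 1 < μ.blockSize j := by
      by_contra h
      exact hij (if_neg h)
    rw [hij', hx hcont]
  · have hsum := sum_range_blockCoeff A (partsList μ)
    rw [sum_partsList, hA] at hsum
    rw [det_diagonal, hprod, Fin.sum_univ_eq_sum_range x, hsum, zpow_natCast,
      Units.val_pow_eq_pow_val, Units.val_mk0]

theorem stmt8_general (k : Type) [Field k] [CharZero k] (n : ℕ)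
    (μ : Nat.Partition n) :
    {d : k | ∃ g : Matrix (Fin n) (Fin n) k, IsUnit g ∧
        g * jordanMat k μ = jordanMat k μ * g ∧
        g * hMat k μ = hMat k μ * g ∧
        g * yMat k μ = yMat k μ * g ∧ g.det = d} =
      {d : k | ∃ c : k, c ≠ 0 ∧ d = c ^ μ.parts.gcd} := by
  ext d
  constructor
  · rintro ⟨g, hg, hJ, hH, -, rfl⟩
    exact exists_det_eq_pow_gcd_of_commute hg hJ hH
  · rintro ⟨c, hc, rfl⟩
    exact exists_commute_det_eq_pow_gcd μ hc

/-- Over a field of characteristic zero, the set of determinants of invertible matrices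
commuting with `J_μ`, `H_μ` and `Y_μ` is exactly the set of `m`-th powers in `kˣ`,
where `m = gcd(μ)`. -/
theorem stmt8 (k : Type) [Field k] [CharZero k] (n : ℕ) (hn : 2 ≤ n)
    (μ : Nat.Partition n) :
    {d : k | ∃ g : Matrix (Fin n) (Fin n) k, IsUnit g ∧
        g * jordanMat k μ = jordanMat k μ * g ∧
        g * hMat k μ = hMat k μ * g ∧
        g * yMat k μ = yMat k μ * g ∧ g.det = d} =
      {d : k | ∃ c : k, c ≠ 0 ∧ d = c ^ μ.parts.gcd} :=
  stmt8_general k n μ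
end
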